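/- arXiv:cond-mat/0303241 — 4 statements merged into one kernel-verified Lean document; each statement's English description precedes it below -/
import Mathlib

section
/- Let H be a real Hilbert space, A a bounded self-adjoint positive definite operator on H, and k > 0. If (I + kA)u = v with u ≠ 0, then the Rayleigh quotients satisfy (u, Au)/(u,u) ≤ (v, Av)/(v,v). -/
open RealInnerProductSpace

theorem stmt8 {H : Type*} [NormedAddCommGroup H] [InnerProductSpace ℝ H] [CompleteSpace H]
    (A : H →L[ℝ] H) (hsa : ∀ x y : H, ⟪A x, y⟫ = ⟪x, A y⟫)
    (c : ℝ) (hc : 0 < c) (hpd : ∀ w : H, c * ⟪w, w⟫ ≤ ⟪w, A w⟫)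
    (k : ℝ) (hk : 0 < k) (u v : H) (hu : u ≠ 0) (hv : v = u + k • A u) :
    ⟪u, A u⟫ / ⟪u, u⟫ ≤ ⟪v, A v⟫ / ⟪v, v⟫ := by
  set a0 : ℝ := ⟪u, u⟫ with ha0
  set a1 : ℝ := ⟪u, A u⟫ with ha1
  set a2 : ℝ := ⟪A u, A u⟫ with ha2
  set a3 : ℝ := ⟪A u, A (A u)⟫ with ha3
  have h0 : 0 < a0 := by
    rw [ha0, real_inner_self_eq_norm_sq]
    exact pow_pos (norm_pos_iff.mpr hu) 2
  have h1 : 0 < a1 := lt_of_lt_of_le (by positivity) (hpd u)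
  have hAu : A u ≠ 0 := by
    intro h
    rw [ha1, h] at h1
    simp at h1
  have h2 : 0 < a2 := by
    rw [ha2, real_inner_self_eq_norm_sq]
    exact pow_pos (norm_pos_iff.mpr hAu) 2
  have h3 : 0 < a3 := lt_of_lt_of_le (by positivity) (hpd (A u))
  -- Cauchy-Schwarz : a1^2 ≤ a0 * a2
  have hcs1 : a1 * a1 ≤ a0 * a2 := real_inner_mul_inner_self_le u (A u)
  -- A-Cauchy-Schwarz : a2^2 ≤ a1 * a3, via quadratic in t = -a2/a3
  have hcs2 : a2 * a2 ≤ a1 * a3 := by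
    have hq : ∀ t : ℝ, 0 ≤ a1 + 2 * t * a2 + t ^ 2 * a3 := by
      intro t
      have := hpd (u + t • A u)
      have hpos : (0:ℝ) ≤ ⟪u + t • A u, A (u + t • A u)⟫ :=
        le_trans (by nlinarith [real_inner_self_nonneg (x := u + t • A u)]) this
      have hexp : ⟪u + t • A u, A (u + t • A u)⟫ = a1 + 2 * t * a2 + t ^ 2 * a3 := by
        simp only [map_add, map_smul, inner_add_left, inner_add_right,
          inner_smul_left, inner_smul_right, RCLike.conj_to_real]
        have h12 : ⟪u, A (A u)⟫ = a2 := by rw [← hsa]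
        have h21 : ⟪A u, A u⟫ = a2 := rfl
        have h11 : ⟪u, A u⟫ = a1 := rfl
        simp only [h12, ← ha1, ← ha2, ← ha3]
        try ring
      linarith [hexp ▸ hpos]
    have := hq (-(a2 / a3))
    have h' : a1 - a2 ^ 2 / a3 ≥ 0 := by
      have : a1 + 2 * (-(a2 / a3)) * a2 + (-(a2 / a3)) ^ 2 * a3 = a1 - a2 ^ 2 / a3 := by
        field_simp; ring
      linarith [this ▸ hq (-(a2 / a3))]
    have : a2 ^ 2 ≤ a1 * a3 := by
      rw [ge_iff_le, sub_nonneg, div_le_iff₀ h3] at h'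
      linarith
    nlinarith
  have hcs3 : a1 * a2 ≤ a0 * a3 := by
    nlinarith [mul_pos h1 h2, mul_pos h0 h3]
  have hvv : ⟪v, v⟫ = a0 + 2 * k * a1 + k ^ 2 * a2 := by
    simp only [hv, inner_add_left, inner_add_right, inner_smul_left, inner_smul_right,
      RCLike.conj_to_real]
    have h21 : ⟪A u, u⟫ = a1 := by rw [hsa]
    rw [← ha0, ← ha1, ← ha2, h21]
    ring
  have hvAv : ⟪v, A v⟫ = a1 + 2 * k * a2 + k ^ 2 * a3 := by
    simp only [hv, map_add, map_smul, inner_add_left, inner_add_right,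
      inner_smul_left, inner_smul_right, RCLike.conj_to_real]
    have h12 : ⟪u, A (A u)⟫ = a2 := by rw [← hsa]
    have h21 : ⟪A u, u⟫ = a1 := by rw [hsa]
    simp only [h12, ← ha1, ← ha2, ← ha3]
    try ring
  have hvvpos : 0 < ⟪v, v⟫ := by rw [hvv]; nlinarith
  rw [hvv, hvAv, div_le_div_iff₀ h0 (by rw [hvv] at hvvpos; exact hvvpos)]
  nlinarith [mul_pos hk (mul_pos h0 h2)]
end

section
/- Let A be a real symmetric positive definite (M−1)×(M−1) matrix and k > 0. Define the discretized normalized gradient flow: Ũ^{n+1} = (I + kA)^{-1} Uⁿ and U^{n+1} = Ũ^{n+1}/‖Ũ^{n+1}‖, starting from U⁰ with ‖U⁰‖ = 1. Then the discrete energy E(U) = UᵀAU is non-increasing: E(U^{n+1}) ≤ E(Uⁿ) for all n ≥ 0. -/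
open Matrix

/-!
Write `w = (I + kA)⁻¹ Uⁿ`, so that `Uⁿ = w + k A w` has unit length and `U^{n+1} = w / ‖w‖`.
So it suffices that the Rayleigh quotient `E(x) / ‖x‖²` does not decrease under `x ↦ x + k A x`.
Clearing denominators, with `tⱼ = wᵀAʲw`, this reads
`t₁ (t₀ + 2k t₁ + k² t₂) ≤ t₀ (t₁ + 2k t₂ + k² t₃)`, i.e. `2k (t₀t₂ - t₁²) + k² (t₀t₃ - t₁t₂) ≥ 0`.
Both brackets are nonnegative because `j ↦ tⱼ` is log-convex: `t₁² ≤ t₀t₂` and `t₂² ≤ t₁t₃`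
are Cauchy–Schwarz inequalities for the Euclidean and the `A`-inner product.
-/

namespace Matrix

variable {ι : Type*} [Fintype ι]

lemma PosSemidef.dotProduct_mulVec_mul_le {M : Matrix ι ι ℝ} (hM : M.PosSemidef) (x y : ι → ℝ) :
    (x ⬝ᵥ M *ᵥ y) * (y ⬝ᵥ M *ᵥ x) ≤ (x ⬝ᵥ M *ᵥ x) * (y ⬝ᵥ M *ᵥ y) := by
  classical
  have hnonneg (z : ι → ℝ) : 0 ≤ toBilin' M z z := by
    simpa only [toBilin'_apply', star_trivial] using hM.dotProduct_mulVec_nonneg z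
  simpa only [toBilin'_apply'] using
    (toBilin' M).apply_mul_apply_le_of_forall_zero_le hnonneg x y

lemma IsHermitian.dotProduct_mulVec_comm {M : Matrix ι ι ℝ} (hM : M.IsHermitian) (x y : ι → ℝ) :
    x ⬝ᵥ M *ᵥ y = y ⬝ᵥ M *ᵥ x := by
  rw [dotProduct_mulVec, ← mulVec_transpose, ← conjTranspose_eq_transpose_of_trivial, hM.eq,
    dotProduct_comm]

lemma PosSemidef.rayleigh_le_add_smul_mulVec {A : Matrix ι ι ℝ}
    (hA : A.PosSemidef) {k : ℝ} (hk : 0 ≤ k) (w : ι → ℝ) :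
    (w ⬝ᵥ A *ᵥ w) * ((w + k • A *ᵥ w) ⬝ᵥ (w + k • A *ᵥ w)) ≤
      (w ⬝ᵥ w) * ((w + k • A *ᵥ w) ⬝ᵥ A *ᵥ (w + k • A *ᵥ w)) := by
  set v := A *ᵥ w
  have hvw : v ⬝ᵥ w = w ⬝ᵥ v := dotProduct_comm v w
  have hwAv : w ⬝ᵥ A *ᵥ v = v ⬝ᵥ v := hA.isHermitian.dotProduct_mulVec_comm w v
  have ht₀ : 0 ≤ w ⬝ᵥ w := by simpa only [star_trivial] using dotProduct_self_star_nonneg w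
  have ht₁ : 0 ≤ w ⬝ᵥ v := by simpa only [star_trivial] using hA.dotProduct_mulVec_nonneg w
  have ht₂ : 0 ≤ v ⬝ᵥ v := by simpa only [star_trivial] using dotProduct_self_star_nonneg v
  have ht₃ : 0 ≤ v ⬝ᵥ A *ᵥ v := by simpa only [star_trivial] using hA.dotProduct_mulVec_nonneg v
  have hcs₁ : (w ⬝ᵥ v) * (w ⬝ᵥ v) ≤ (w ⬝ᵥ w) * (v ⬝ᵥ v) := by
    classical
    simpa only [one_mulVec, hvw] using PosSemidef.one.dotProduct_mulVec_mul_le w v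
  have hcs₂ : (v ⬝ᵥ v) * (v ⬝ᵥ v) ≤ (w ⬝ᵥ v) * (v ⬝ᵥ A *ᵥ v) := by
    simpa only [hwAv] using hA.dotProduct_mulVec_mul_le w v
  have hlogconvex : (w ⬝ᵥ v) * (v ⬝ᵥ v) ≤ (w ⬝ᵥ w) * (v ⬝ᵥ A *ᵥ v) := by
    rcases (mul_nonneg ht₁ ht₂).eq_or_lt with h | h
    · rw [← h]
      exact mul_nonneg ht₀ ht₃
    · refine le_of_mul_le_mul_left ?_ h
      calc (w ⬝ᵥ v) * (v ⬝ᵥ v) * ((w ⬝ᵥ v) * (v ⬝ᵥ v))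
          = ((w ⬝ᵥ v) * (w ⬝ᵥ v)) * ((v ⬝ᵥ v) * (v ⬝ᵥ v)) := by ring
        _ ≤ ((w ⬝ᵥ w) * (v ⬝ᵥ v)) * ((w ⬝ᵥ v) * (v ⬝ᵥ A *ᵥ v)) :=
          mul_le_mul hcs₁ hcs₂ (mul_self_nonneg _) (mul_nonneg ht₀ ht₂)
        _ = (w ⬝ᵥ v) * (v ⬝ᵥ v) * ((w ⬝ᵥ w) * (v ⬝ᵥ A *ᵥ v)) := by ring
  simp only [mulVec_add, mulVec_smul, dotProduct_add, add_dotProduct, dotProduct_smul,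
    smul_dotProduct, smul_eq_mul, hvw, hwAv, ← hA.isHermitian.dotProduct_mulVec_comm w]
  nlinarith [mul_nonneg hk (sub_nonneg.2 hcs₁),
    mul_nonneg (mul_self_nonneg k) (sub_nonneg.2 hlogconvex)]

lemma inv_sqrt_smul_dotProduct_mulVec (M : Matrix ι ι ℝ) (x : ι → ℝ) :
    ((√(x ⬝ᵥ x))⁻¹ • x) ⬝ᵥ M *ᵥ ((√(x ⬝ᵥ x))⁻¹ • x) = (x ⬝ᵥ M *ᵥ x) / (x ⬝ᵥ x) := by
  have hx : 0 ≤ x ⬝ᵥ x := by simpa only [star_trivial] using dotProduct_self_star_nonneg x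
  rw [mulVec_smul, dotProduct_smul, smul_dotProduct, smul_eq_mul, smul_eq_mul, ← mul_assoc,
    ← mul_inv, Real.mul_self_sqrt hx, inv_mul_eq_div]

lemma inv_sqrt_smul_dotProduct_self {x : ι → ℝ} (hx : x ≠ 0) :
    ((√(x ⬝ᵥ x))⁻¹ • x) ⬝ᵥ ((√(x ⬝ᵥ x))⁻¹ • x) = 1 := by
  have hpos : 0 < x ⬝ᵥ x := by
    simpa only [star_trivial] using dotProduct_self_star_pos_iff.2 hx
  rw [dotProduct_smul, smul_dotProduct, smul_eq_mul, smul_eq_mul, ← mul_assoc, ← mul_inv,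
    Real.mul_self_sqrt hpos.le, inv_mul_cancel₀ hpos.ne']

end Matrix

theorem stmt9 {n : ℕ} (A : Matrix (Fin n) (Fin n) ℝ) (hA : A.PosDef)
    (k : ℝ) (hk : 0 < k) (U : ℕ → Fin n → ℝ) (hU0 : U 0 ⬝ᵥ U 0 = 1)
    (hstep : ∀ m : ℕ,
      U (m + 1) =
        (Real.sqrt ((((1 : Matrix (Fin n) (Fin n) ℝ) + k • A)⁻¹ *ᵥ U m) ⬝ᵥ
            (((1 : Matrix (Fin n) (Fin n) ℝ) + k • A)⁻¹ *ᵥ U m)))⁻¹ •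
          (((1 : Matrix (Fin n) (Fin n) ℝ) + k • A)⁻¹ *ᵥ U m)) :
    ∀ m : ℕ, U (m + 1) ⬝ᵥ (A *ᵥ U (m + 1)) ≤ U m ⬝ᵥ (A *ᵥ U m) := by
  set C : Matrix (Fin n) (Fin n) ℝ := 1 + k • A
  have hC : IsUnit C.det := (isUnit_iff_isUnit_det C).1
    (PosDef.one.add_posSemidef (hA.posSemidef.smul hk.le)).isUnit
  have hU (m : ℕ) : U m = C⁻¹ *ᵥ U m + k • A *ᵥ (C⁻¹ *ᵥ U m) := by
    calc U m = C *ᵥ (C⁻¹ *ᵥ U m) := by rw [mulVec_mulVec, mul_nonsing_inv _ hC, one_mulVec]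
      _ = _ := by rw [add_mulVec, one_mulVec, smul_mulVec]
  have hw (m : ℕ) (hm : U m ⬝ᵥ U m = 1) : C⁻¹ *ᵥ U m ≠ 0 := fun h0 => by
    rw [hU m, h0, mulVec_zero, smul_zero, add_zero, dotProduct_zero] at hm
    exact zero_ne_one hm
  have hunit (m : ℕ) : U m ⬝ᵥ U m = 1 := by
    induction m with
    | zero => exact hU0
    | succ m ih => rw [hstep m]; exact inv_sqrt_smul_dotProduct_self (hw m ih)
  intro m
  have hpos : 0 < (C⁻¹ *ᵥ U m) ⬝ᵥ (C⁻¹ *ᵥ U m) := by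
    simpa only [star_trivial] using dotProduct_self_star_pos_iff.2 (hw m (hunit m))
  have hdecrease := hA.posSemidef.rayleigh_le_add_smul_mulVec hk.le (C⁻¹ *ᵥ U m)
  rw [← hU m, hunit m, mul_one] at hdecrease
  rw [hstep m, inv_sqrt_smul_dotProduct_mulVec, div_le_iff₀ hpos, mul_comm]
  exact hdecrease
end

section
/- Let B be a symmetric positive definite matrix with spectral radius ρ(kB) < 1 for a given k > 0. Then the forward-Euler normalized flow Ũ^{n+1} = (I − kB)Uⁿ, U^{n+1} = Ũ^{n+1}/‖Ũ^{n+1}‖, is energy diminishing for the energy E(U) = UᵀAU with A = (I − kB)^{-1}B, i.e. E(U^{n+1}) ≤ E(Uⁿ) for all n. -/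
/-!
Write `C = 1 - kB`, a positive definite matrix by the spectral bound, so that the iteration is
`U ↦ CU / ‖CU‖` and, since `kB = 1 - C`, the energy is `E(U) = k⁻¹ (Uᵀ C⁻¹ U - ‖U‖²)`.
For a unit vector `v` the energy decrease therefore reads
`(vᵀ C v) / ‖Cv‖² ≤ vᵀ C⁻¹ v`, which follows by multiplying the two Cauchy–Schwarz inequalities
`(vᵀ C v)² ≤ ‖v‖² ‖Cv‖²` and `‖v‖⁴ = (vᵀ C C⁻¹ v)² ≤ (vᵀ C v)(vᵀ C⁻¹ v)`.
-/

open Matrix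

noncomputable section

variable {ι : Type*} [Fintype ι]

def normalizeVec (w : ι → ℝ) : ι → ℝ := (√(w ⬝ᵥ w))⁻¹ • w

lemma normalizeVec_dotProduct_mulVec (M : Matrix ι ι ℝ) (w : ι → ℝ) :
    normalizeVec w ⬝ᵥ M *ᵥ normalizeVec w = (w ⬝ᵥ M *ᵥ w) / (w ⬝ᵥ w) := by
  have hsq : (√(w ⬝ᵥ w)) ^ 2 = w ⬝ᵥ w := Real.sq_sqrt (dotProduct_self_star_nonneg w)
  rw [normalizeVec, mulVec_smul, smul_dotProduct, dotProduct_smul, smul_eq_mul, smul_eq_mul,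
    ← mul_assoc, ← sq, inv_pow, hsq, inv_mul_eq_div]

lemma Matrix.PosSemidef.dotProduct_mulVec_sq_le {M : Matrix ι ι ℝ} (hM : M.PosSemidef)
    (x y : ι → ℝ) : (x ⬝ᵥ M *ᵥ y) ^ 2 ≤ (x ⬝ᵥ M *ᵥ x) * (y ⬝ᵥ M *ᵥ y) := by
  let := M.toSeminormedAddCommGroup hM
  let := M.toInnerProductSpace hM
  have h_inner (a b : ι → ℝ) : inner ℝ a b = a ⬝ᵥ M *ᵥ b := by
    change (M *ᵥ b) ⬝ᵥ star a = _
    simp [dotProduct_comm]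
  have h := real_inner_mul_inner_self_le x y
  rwa [h_inner, h_inner, h_inner, ← sq] at h

variable [DecidableEq ι]

lemma dotProduct_self_normalizeVec {w : ι → ℝ} (hw : w ≠ 0) :
    normalizeVec w ⬝ᵥ normalizeVec w = 1 := by
  simpa [div_self, dotProduct_self_eq_zero, hw] using normalizeVec_dotProduct_mulVec 1 w

lemma Matrix.PosDef.dotProduct_mulVec_mul_le {C : Matrix ι ι ℝ} (hC : C.PosDef) (v : ι → ℝ) :
    (v ⬝ᵥ C *ᵥ v) * (v ⬝ᵥ v) ≤ ((C *ᵥ v) ⬝ᵥ (C *ᵥ v)) * (v ⬝ᵥ C⁻¹ *ᵥ v) := by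
  rcases eq_or_ne v 0 with rfl | hv
  · simp
  have ha : 0 < v ⬝ᵥ C *ᵥ v := by simpa using hC.dotProduct_mulVec_pos hv
  have hp : 0 < v ⬝ᵥ v := by simpa using dotProduct_star_self_pos_iff.mpr hv
  have h_euclid : (v ⬝ᵥ C *ᵥ v) ^ 2 ≤ (v ⬝ᵥ v) * ((C *ᵥ v) ⬝ᵥ (C *ᵥ v)) := by
    simpa using PosSemidef.one.dotProduct_mulVec_sq_le v (C *ᵥ v)
  have h_weighted : (v ⬝ᵥ v) ^ 2 ≤ (v ⬝ᵥ C *ᵥ v) * (v ⬝ᵥ C⁻¹ *ᵥ v) := by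
    have h := hC.posSemidef.dotProduct_mulVec_sq_le v (C⁻¹ *ᵥ v)
    rwa [mulVec_mulVec, mul_nonsing_inv _ hC.det_pos.ne'.isUnit, one_mulVec,
      dotProduct_comm (C⁻¹ *ᵥ v) v] at h
  have hb : 0 ≤ (C *ᵥ v) ⬝ᵥ (C *ᵥ v) := dotProduct_self_star_nonneg _
  refine le_of_mul_le_mul_right ?_ (mul_pos ha hp)
  calc _ = (v ⬝ᵥ C *ᵥ v) ^ 2 * (v ⬝ᵥ v) ^ 2 := by ring
    _ ≤ _ := mul_le_mul h_euclid h_weighted (sq_nonneg _) (mul_nonneg hp.le hb)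
    _ = _ := by ring

lemma Matrix.PosDef.mulVec_ne_zero {C : Matrix ι ι ℝ} (hC : C.PosDef) {v : ι → ℝ}
    (hv : v ≠ 0) : C *ᵥ v ≠ 0 := fun h =>
  hv (mulVec_injective_iff_isUnit.mpr hC.isUnit (by rw [h, mulVec_zero]))

lemma Matrix.PosDef.normalizeVec_mulVec_dotProduct_inv_mulVec_le {C : Matrix ι ι ℝ}
    (hC : C.PosDef) {v : ι → ℝ} (hv : v ⬝ᵥ v = 1) :
    normalizeVec (C *ᵥ v) ⬝ᵥ C⁻¹ *ᵥ normalizeVec (C *ᵥ v) ≤ v ⬝ᵥ C⁻¹ *ᵥ v := by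
  have hv0 : v ≠ 0 := by rintro rfl; simp at hv
  have hb : 0 < (C *ᵥ v) ⬝ᵥ (C *ᵥ v) := by
    simpa using dotProduct_star_self_pos_iff.mpr (hC.mulVec_ne_zero hv0)
  rw [normalizeVec_dotProduct_mulVec, mulVec_mulVec, nonsing_inv_mul _ hC.det_pos.ne'.isUnit,
    one_mulVec, dotProduct_comm, div_le_iff₀' hb]
  simpa [hv] using hC.dotProduct_mulVec_mul_le v

open scoped Pointwise in
lemma Matrix.IsHermitian.posDef_one_sub {A : Matrix ι ι ℝ} (hA : A.IsHermitian)
    (h : ∀ μ ∈ spectrum ℝ A, μ < 1) : (1 - A).PosDef := by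
  have hA' : (1 - A).IsHermitian := isHermitian_one.sub hA
  refine hA'.posDef_iff_eigenvalues_pos.mpr fun i => ?_
  have hspec : spectrum ℝ (1 - A) = ({1} : Set ℝ) - spectrum ℝ A := by
    rw [spectrum.singleton_sub_eq, map_one]
  have hi := hA'.eigenvalues_mem_spectrum_real i
  rw [hspec] at hi
  obtain ⟨_, rfl, μ, hμ, hi⟩ := hi
  linarith [h μ hμ]

lemma inv_one_sub_smul_mul_eq {k : ℝ} (hk : k ≠ 0) {B : Matrix ι ι ℝ}
    (hB : IsUnit (1 - k • B)) : (1 - k • B)⁻¹ * B = k⁻¹ • ((1 - k • B)⁻¹ - 1) := by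
  have hkB : (1 - k • B)⁻¹ * (k • B) = (1 - k • B)⁻¹ - 1 := by
    calc (1 - k • B)⁻¹ * (k • B) = (1 - k • B)⁻¹ * (1 - (1 - k • B)) := by rw [sub_sub_cancel]
      _ = _ := by rw [mul_sub, mul_one, nonsing_inv_mul _ ((isUnit_iff_isUnit_det _).mp hB)]
  rw [← hkB, mul_smul_comm, smul_smul, inv_mul_cancel₀ hk, one_smul]

theorem stmt11 {n : ℕ} (B : Matrix (Fin n) (Fin n) ℝ) (hB : B.PosDef)
    (k : ℝ) (hk : 0 < k) (hρ : ∀ μ ∈ spectrum ℝ (k • B), |μ| < 1)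
    (U : ℕ → Fin n → ℝ) (hU0 : U 0 ⬝ᵥ U 0 = 1)
    (hstep : ∀ m : ℕ,
      U (m + 1) =
        (Real.sqrt ((((1 : Matrix (Fin n) (Fin n) ℝ) - k • B) *ᵥ U m) ⬝ᵥ
            (((1 : Matrix (Fin n) (Fin n) ℝ) - k • B) *ᵥ U m)))⁻¹ •
          (((1 : Matrix (Fin n) (Fin n) ℝ) - k • B) *ᵥ U m)) :
    ∀ m : ℕ,
      U (m + 1) ⬝ᵥ ((((1 : Matrix (Fin n) (Fin n) ℝ) - k • B)⁻¹ * B) *ᵥ U (m + 1)) ≤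
        U m ⬝ᵥ ((((1 : Matrix (Fin n) (Fin n) ℝ) - k • B)⁻¹ * B) *ᵥ U m) := by
  set C := (1 : Matrix (Fin n) (Fin n) ℝ) - k • B
  have hC : C.PosDef :=
    (hB.isHermitian.smul (IsSelfAdjoint.all k)).posDef_one_sub
      fun μ hμ => (abs_lt.mp (hρ μ hμ)).2
  have h_energy (v : Fin n → ℝ) : v ⬝ᵥ (C⁻¹ * B) *ᵥ v = k⁻¹ * (v ⬝ᵥ C⁻¹ *ᵥ v - v ⬝ᵥ v) := by
    rw [inv_one_sub_smul_mul_eq hk.ne' hC.isUnit, smul_mulVec, sub_mulVec, one_mulVec,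
      dotProduct_smul, dotProduct_sub, smul_eq_mul]
  have h_unit (m : ℕ) : U m ⬝ᵥ U m = 1 := by
    induction m with
    | zero => exact hU0
    | succ m ih =>
      have hv0 : U m ≠ 0 := by rintro h; simp [h] at ih
      rw [hstep m]
      exact dotProduct_self_normalizeVec (hC.mulVec_ne_zero hv0)
  intro m
  rw [h_energy, h_energy, h_unit, h_unit, hstep m]
  gcongr
  exact hC.normalizeVec_mulVec_dotProduct_inv_mulVec_le (h_unit m)
end
end

section
/- Suppose B is a symmetric matrix with ρ(B) < 1 whose eigenvalues are all positive. Then the scheme Ũ^{n+1} = BUⁿ, U^{n+1} = Ũ^{n+1}/‖Ũ^{n+1}‖ is energy diminishing for the energy E(U) = UᵀAU with A = (1/k)(B^{-1} − I) for any k > 0; i.e., the Rayleigh quotient of B^{-1} is non-increasing along the normalized iteration, equivalently (Uⁿ)ᵀB^{-1}Uⁿ is non-increasing in n. -/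
open Matrix

noncomputable section

/-!
With `R(x) = xᵀB⁻¹x / xᵀx` the Rayleigh quotient of `B⁻¹`, the normalized iterate satisfies
`(U^{n+1})ᵀB⁻¹U^{n+1} = R(BUⁿ)`, so it suffices that `R(Bx) ≤ R(x)`, i.e.
`(xᵀBx)(xᵀx) ≤ (xᵀB⁻¹x)(BxᵀBx)`. This is the product of two Cauchy–Schwarz inequalities,
`(xᵀx)² ≤ (xᵀBx)(xᵀB⁻¹x)` in the `B`-inner product (applied to `x` and `B⁻¹x`) and
`(xᵀBx)² ≤ (xᵀx)(BxᵀBx)` in the Euclidean one. The energy `E(U) = (1/k)(UᵀB⁻¹U − UᵀU)` differs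
from `UᵀB⁻¹U` only by a positive factor and a constant along the unit-norm iteration.
-/

variable {ι : Type*} [Fintype ι]

theorem dotProduct_self_nonneg (v : ι → ℝ) : 0 ≤ v ⬝ᵥ v :=
  Fintype.sum_nonneg fun i => mul_self_nonneg (v i)

theorem dotProduct_self_pos {v : ι → ℝ} (hv : v ≠ 0) : 0 < v ⬝ᵥ v :=
  (dotProduct_self_nonneg v).lt_of_ne' (dotProduct_self_eq_zero.not.mpr hv)

theorem dotProduct_self_inv_sqrt_smul {v : ι → ℝ} (hv : v ≠ 0) :
    ((√(v ⬝ᵥ v))⁻¹ • v) ⬝ᵥ ((√(v ⬝ᵥ v))⁻¹ • v) = 1 := by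
  rw [smul_dotProduct, dotProduct_smul, smul_eq_mul, smul_eq_mul, ← mul_assoc, ← mul_inv,
    Real.mul_self_sqrt (dotProduct_self_nonneg v), inv_mul_cancel₀ (dotProduct_self_pos hv).ne']

namespace Matrix

def rayleighQuotient (M : Matrix ι ι ℝ) (x : ι → ℝ) : ℝ := x ⬝ᵥ M *ᵥ x / (x ⬝ᵥ x)

theorem dotProduct_inv_sqrt_smul_mulVec (M : Matrix ι ι ℝ) (v : ι → ℝ) :
    ((√(v ⬝ᵥ v))⁻¹ • v) ⬝ᵥ M *ᵥ ((√(v ⬝ᵥ v))⁻¹ • v) = M.rayleighQuotient v := by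
  rw [rayleighQuotient, mulVec_smul, smul_dotProduct, dotProduct_smul, smul_eq_mul, smul_eq_mul,
    ← mul_assoc, ← mul_inv, Real.mul_self_sqrt (dotProduct_self_nonneg v), inv_mul_eq_div]

theorem PosSemidef.dotProduct_mulVec_sq_le_s16 {M : Matrix ι ι ℝ} (hM : M.PosSemidef)
    (x y : ι → ℝ) : (x ⬝ᵥ M *ᵥ y) ^ 2 ≤ (x ⬝ᵥ M *ᵥ x) * (y ⬝ᵥ M *ᵥ y) := by
  classical
  have hsymm : (toBilin' M).IsSymm := by
    rw [← toBilin_basisFun, isSymm_toBilin_iff_isSymm, ← isHermitian_iff_isSymm]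
    exact hM.isHermitian
  have hnonneg (z : ι → ℝ) : 0 ≤ toBilin' M z z := by
    simpa [toBilin'_apply'] using hM.dotProduct_mulVec_nonneg z
  simpa only [toBilin'_apply'] using
    (toBilin' M).apply_sq_le_of_symm hnonneg (LinearMap.BilinForm.isSymm_iff.mp hsymm) x y

theorem PosDef.mulVec_ne_zero_s16 {B : Matrix ι ι ℝ} (hB : B.PosDef) {x : ι → ℝ} (hx : x ≠ 0) :
    B *ᵥ x ≠ 0 := fun h => by
  simpa [h] using hB.dotProduct_mulVec_pos hx

variable [DecidableEq ι]

theorem PosDef.dotProduct_mulVec_mul_dotProduct_self_le {B : Matrix ι ι ℝ} (hB : B.PosDef)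
    (x : ι → ℝ) :
    (x ⬝ᵥ B *ᵥ x) * (x ⬝ᵥ x) ≤ (x ⬝ᵥ B⁻¹ *ᵥ x) * ((B *ᵥ x) ⬝ᵥ (B *ᵥ x)) := by
  have hBBinv : B * B⁻¹ = 1 := mul_nonsing_inv B ((isUnit_iff_isUnit_det B).mp hB.isUnit)
  have ha : 0 ≤ x ⬝ᵥ B *ᵥ x := by simpa using hB.posSemidef.dotProduct_mulVec_nonneg x
  have hc : 0 ≤ x ⬝ᵥ B⁻¹ *ᵥ x := by simpa using hB.inv.posSemidef.dotProduct_mulVec_nonneg x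
  have hs := dotProduct_self_nonneg x
  have ht := dotProduct_self_nonneg (B *ᵥ x)
  have cs_B : (x ⬝ᵥ x) ^ 2 ≤ (x ⬝ᵥ B *ᵥ x) * (x ⬝ᵥ B⁻¹ *ᵥ x) := by
    have h := hB.posSemidef.dotProduct_mulVec_sq_le_s16 x (B⁻¹ *ᵥ x)
    rwa [mulVec_mulVec, hBBinv, one_mulVec, dotProduct_comm (B⁻¹ *ᵥ x) x] at h
  have cs_one : (x ⬝ᵥ B *ᵥ x) ^ 2 ≤ (x ⬝ᵥ x) * ((B *ᵥ x) ⬝ᵥ (B *ᵥ x)) := by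
    simpa only [one_mulVec] using PosSemidef.one.dotProduct_mulVec_sq_le_s16 x (B *ᵥ x)
  rcases (mul_nonneg ha hs).eq_or_lt with h0 | hpos
  · rw [← h0]; positivity
  · refine le_of_mul_le_mul_left ?_ hpos
    nlinarith [mul_le_mul cs_B cs_one (sq_nonneg _) (by positivity)]

theorem PosDef.rayleighQuotient_inv_mulVec_le {B : Matrix ι ι ℝ} (hB : B.PosDef) (x : ι → ℝ) :
    B⁻¹.rayleighQuotient (B *ᵥ x) ≤ B⁻¹.rayleighQuotient x := by
  rcases eq_or_ne x 0 with rfl | hx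
  · simp [rayleighQuotient]
  have hBinvB : B⁻¹ * B = 1 := nonsing_inv_mul B ((isUnit_iff_isUnit_det B).mp hB.isUnit)
  rw [rayleighQuotient, rayleighQuotient, mulVec_mulVec, hBinvB, one_mulVec, dotProduct_comm,
    div_le_div_iff₀ (dotProduct_self_pos (hB.mulVec_ne_zero_s16 hx)) (dotProduct_self_pos hx)]
  exact hB.dotProduct_mulVec_mul_dotProduct_self_le x

theorem dotProduct_smul_sub_one_mulVec (c : ℝ) (M : Matrix ι ι ℝ) (x : ι → ℝ) :
    x ⬝ᵥ (c • (M - 1)) *ᵥ x = c * (x ⬝ᵥ M *ᵥ x - x ⬝ᵥ x) := by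
  rw [smul_mulVec, dotProduct_smul, smul_eq_mul, sub_mulVec, one_mulVec, dotProduct_sub]

end Matrix

theorem stmt16 {n : ℕ} (B : Matrix (Fin n) (Fin n) ℝ) (hB : B.IsSymm)
    (hspec : ∀ μ ∈ spectrum ℝ B, 0 < μ ∧ μ < 1)
    (k : ℝ) (hk : 0 < k)
    (U : ℕ → Fin n → ℝ) (hU0 : U 0 ⬝ᵥ U 0 = 1)
    (hstep : ∀ m : ℕ,
      U (m + 1) = (Real.sqrt ((B *ᵥ U m) ⬝ᵥ (B *ᵥ U m)))⁻¹ • (B *ᵥ U m)) :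
    ∀ m : ℕ,
      (U (m + 1) ⬝ᵥ (((1 / k) • (B⁻¹ - 1)) *ᵥ U (m + 1)) ≤
        U m ⬝ᵥ (((1 / k) • (B⁻¹ - 1)) *ᵥ U m)) ∧
      U (m + 1) ⬝ᵥ (B⁻¹ *ᵥ U (m + 1)) ≤ U m ⬝ᵥ (B⁻¹ *ᵥ U m) := by
  have hH : B.IsHermitian := isHermitian_iff_isSymm.mpr hB
  have hPD : B.PosDef := hH.posDef_iff_eigenvalues_pos.mpr fun i =>
    (hspec _ (hH.eigenvalues_mem_spectrum_real i)).1
  have hunit : ∀ m, U m ⬝ᵥ U m = 1 := by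
    intro m
    induction m with
    | zero => exact hU0
    | succ m ih =>
      have hne : U m ≠ 0 := fun h => by simp [h] at ih
      rw [hstep m]
      exact dotProduct_self_inv_sqrt_smul (hPD.mulVec_ne_zero_s16 hne)
  have hdecr : ∀ m, U (m + 1) ⬝ᵥ B⁻¹ *ᵥ U (m + 1) ≤ U m ⬝ᵥ B⁻¹ *ᵥ U m := fun m => by
    rw [hstep m, dotProduct_inv_sqrt_smul_mulVec]
    simpa only [rayleighQuotient, hunit m, div_one] using hPD.rayleighQuotient_inv_mulVec_le (U m)
  intro m
  refine ⟨?_, hdecr m⟩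
  rw [dotProduct_smul_sub_one_mulVec, dotProduct_smul_sub_one_mulVec, hunit, hunit]
  gcongr
  exact hdecr m
end
end
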